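/- Let L₁ be the lattice in ℝ⁴ generated by ℤ⁴ together with (1/2,1/2,0,0), (0,0,1/2,1/2), (1/4,1/4,1/4,1/4), and (1/8,−3/8,1/8,−3/8). Then the number of vectors in L₁ of ℓ¹-norm exactly 1 equals 28. -/

import Mathlib

def l1 {n : ℕ} (x : Fin n → ℝ) : ℝ := ∑ i, |x i|

/-- Integer vectors in `ℝ⁴`. -/
def Zlat4 : Set (Fin 4 → ℝ) := {x | ∀ i, ∃ m : ℤ, x i = (m : ℝ)}

/-- The lattice `L₁` generated by `ℤ⁴`, `(1/2,1/2,0,0)`, `(0,0,1/2,1/2)`,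
`(1/4,1/4,1/4,1/4)` and `(1/8,-3/8,1/8,-3/8)`. -/
def L1 : AddSubgroup (Fin 4 → ℝ) :=
  AddSubgroup.closure (Zlat4 ∪
    {![1/2, 1/2, 0, 0], ![0, 0, 1/2, 1/2], ![1/4, 1/4, 1/4, 1/4], ![1/8, -3/8, 1/8, -3/8]})

/-- The explicit description of `L1` as a predicate. -/
def Mpred (x : Fin 4 → ℝ) : Prop :=
  ∃ a : Fin 4 → ℤ, (∀ i, x i = (a i : ℝ) / 8) ∧
    (8 ∣ a 0 + 3 * a 1) ∧ (8 ∣ a 2 + 3 * a 3) ∧ (4 ∣ a 0 - a 2)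

def Msub : AddSubgroup (Fin 4 → ℝ) where
  carrier := {x | Mpred x}
  zero_mem' := ⟨0, by intro i; simp, by simp, by simp, by simp⟩
  add_mem' := by
    rintro x y ⟨a, ha, ha1, ha2, ha3⟩ ⟨b, hb, hb1, hb2, hb3⟩
    refine ⟨a + b, fun i => ?_, ?_, ?_, ?_⟩
    · simp only [Pi.add_apply, ha i, hb i, Int.cast_add]; ring
    · simp only [Pi.add_apply]; omega
    · simp only [Pi.add_apply]; omega
    · simp only [Pi.add_apply]; omega
  neg_mem' := by
    rintro x ⟨a, ha, ha1, ha2, ha3⟩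
    refine ⟨-a, fun i => ?_, ?_, ?_, ?_⟩
    · simp only [Pi.neg_apply, ha i, Int.cast_neg]; ring
    · simp only [Pi.neg_apply]; omega
    · simp only [Pi.neg_apply]; omega
    · simp only [Pi.neg_apply]; omega

lemma int_mem_L1 (m : Fin 4 → ℤ) : (fun i => (m i : ℝ)) ∈ L1 :=
  AddSubgroup.subset_closure (Or.inl (fun i => ⟨m i, rfl⟩))

lemma int_mem_L1' (m0 m1 m2 m3 : ℤ) : (![(m0 : ℝ), m1, m2, m3] : Fin 4 → ℝ) ∈ L1 := by
  have h : (fun i => ((![m0, m1, m2, m3] : Fin 4 → ℤ) i : ℝ)) = ![(m0 : ℝ), m1, m2, m3] := by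
    funext i; fin_cases i <;> simp
  rw [← h]; exact int_mem_L1 _

lemma g1_mem : (![1/2, 1/2, 0, 0] : Fin 4 → ℝ) ∈ L1 :=
  AddSubgroup.subset_closure (Or.inr (by simp))
lemma g3_mem : (![1/4, 1/4, 1/4, 1/4] : Fin 4 → ℝ) ∈ L1 :=
  AddSubgroup.subset_closure (Or.inr (by simp))
lemma g4_mem : (![1/8, -3/8, 1/8, -3/8] : Fin 4 → ℝ) ∈ L1 :=
  AddSubgroup.subset_closure (Or.inr (by simp))

lemma Msub_le_L1 : Msub ≤ L1 := by
  rintro x ⟨a, hx, h1, h2, h3⟩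
  obtain ⟨c1, hc1⟩ := h3
  have h4 : 4 ∣ a 2 - a 3 := by omega
  obtain ⟨c4, hc4⟩ := h4
  have h5 : 2 ∣ a 2 - c4 := by omega
  obtain ⟨c3, hc3⟩ := h5
  have h6 : 8 ∣ a 1 + a 2 - a 0 - a 3 := by omega
  obtain ⟨m1, hm1⟩ := h6
  have hx' : x = (![0, (m1 : ℝ), 0, 0] : Fin 4 → ℝ)
      + c1 • (![1/2, 1/2, 0, 0] : Fin 4 → ℝ) + c3 • ![1/4, 1/4, 1/4, 1/4]
      + c4 • ![1/8, -3/8, 1/8, -3/8] := by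
    have r1 : (a 0 : ℝ) - a 2 = 4 * c1 := by exact_mod_cast hc1
    have r4 : (a 2 : ℝ) - a 3 = 4 * c4 := by exact_mod_cast hc4
    have r3 : (a 2 : ℝ) - c4 = 2 * c3 := by exact_mod_cast hc3
    have rm : (a 1 : ℝ) + a 2 - a 0 - a 3 = 8 * m1 := by exact_mod_cast hm1
    funext i
    fin_cases i <;>
      · simp [hx]
        push_cast
        linarith
  rw [hx']
  have hint : (![0, (m1 : ℝ), 0, 0] : Fin 4 → ℝ) ∈ L1 := by
    have := int_mem_L1' 0 m1 0 0
    simpa using this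
  exact add_mem (add_mem (add_mem hint (zsmul_mem g1_mem _)) (zsmul_mem g3_mem _))
    (zsmul_mem g4_mem _)

lemma L1_le_Msub : L1 ≤ Msub := by
  rw [L1, AddSubgroup.closure_le]
  rintro x (hx | hx)
  · choose m hm using hx
    exact ⟨fun i => 8 * m i, fun i => by rw [hm i]; push_cast; ring,
      ⟨m 0 + 3 * m 1, by ring⟩, ⟨m 2 + 3 * m 3, by ring⟩, ⟨2 * (m 0 - m 2), by ring⟩⟩
  · simp only [Set.mem_insert_iff, Set.mem_singleton_iff] at hx
    rcases hx with rfl | rfl | rfl | rfl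
    · exact ⟨![4, 4, 0, 0], fun i => by fin_cases i <;> norm_num, by decide, by decide, by decide⟩
    · exact ⟨![0, 0, 4, 4], fun i => by fin_cases i <;> norm_num, by decide, by decide, by decide⟩
    · exact ⟨![2, 2, 2, 2], fun i => by fin_cases i <;> norm_num, by decide, by decide, by decide⟩
    · exact ⟨![1, -3, 1, -3], fun i => by fin_cases i <;> norm_num, by decide, by decide, by decide⟩

def okList : List (ℕ × ℕ × ℕ × ℕ) := [(0,8,8,8), (4,4,8,8), (4,12,8,8), (5,9,5,9), (5,9,9,5), (6,6,6,6), (6,6,10,10), (7,11,7,11), (7,11,11,7), (8,0,8,8), (8,8,0,8), (8,8,4,4), (8,8,4,12), (8,8,8,0), (8,8,8,16), (8,8,12,4), (8,8,12,12), (8,8,16,8), (8,16,8,8), (9,5,5,9), (9,5,9,5), (10,10,6,6), (10,10,10,10), (11,7,7,11), (11,7,11,7), (12,4,8,8), (12,12,8,8), (16,8,8,8)]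

def gmap (q : ℕ × ℕ × ℕ × ℕ) : ℤ × ℤ × ℤ × ℤ :=
  ((q.1 : ℤ) - 8, (q.2.1 : ℤ) - 8, (q.2.2.1 : ℤ) - 8, (q.2.2.2 : ℤ) - 8)

/-- the 28 integer quadruples (the solutions, scaled by 8) -/
def S28 : Finset (ℤ × ℤ × ℤ × ℤ) := (okList.map gmap).toFinset

set_option maxHeartbeats 8000000 in
lemma dec_lemma : ∀ b0 ∈ Finset.range 17, ∀ b1 ∈ Finset.range 17,
    ∀ b2 ∈ Finset.range 17, ∀ b3 ∈ Finset.range 17,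
    (b0 + 3*b1) % 8 = 0 → (b2 + 3*b3) % 8 = 0 → (b0 + 3*b2) % 4 = 0 →
    ((b0 - 8) + (8 - b0)) + ((b1 - 8) + (8 - b1))
      + ((b2 - 8) + (8 - b2)) + ((b3 - 8) + (8 - b3)) = 8 →
    (b0, b1, b2, b3) ∈ okList := by decide

lemma arg_range (a : ℤ) (h1 : -8 ≤ a) (h2 : a ≤ 8) : (a + 8).toNat ∈ Finset.range 17 := by
  simp; omega

lemma arg_mod8 (a0 a1 : ℤ) (h : 8 ∣ a0 + 3*a1) (hb0 : -8 ≤ a0) (hb0' : a0 ≤ 8)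
    (hb1 : -8 ≤ a1) (hb1' : a1 ≤ 8) : ((a0 + 8).toNat + 3*(a1 + 8).toNat) % 8 = 0 := by
  omega

lemma arg_mod4 (a0 a2 : ℤ) (h : 4 ∣ a0 - a2) (hb0 : -8 ≤ a0) (hb0' : a0 ≤ 8)
    (hb2 : -8 ≤ a2) (hb2' : a2 ≤ 8) : ((a0 + 8).toNat + 3*(a2 + 8).toNat) % 4 = 0 := by
  omega

lemma arg_sum (a0 a1 a2 a3 : ℤ) (h : a0.natAbs + a1.natAbs + a2.natAbs + a3.natAbs = 8) :
    (((a0+8).toNat - 8) + (8 - (a0+8).toNat)) + (((a1+8).toNat - 8) + (8 - (a1+8).toNat))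
      + (((a2+8).toNat - 8) + (8 - (a2+8).toNat))
      + (((a3+8).toNat - 8) + (8 - (a3+8).toNat)) = 8 := by
  omega

lemma key_lemma (a0 a1 a2 a3 : ℤ) (h1 : 8 ∣ a0 + 3*a1) (h2 : 8 ∣ a2 + 3*a3)
    (h3 : 4 ∣ a0 - a2) (h : a0.natAbs + a1.natAbs + a2.natAbs + a3.natAbs = 8) :
    (a0, a1, a2, a3) ∈ S28 := by
  have hb0 : -8 ≤ a0 ∧ a0 ≤ 8 := by omega
  have hb1 : -8 ≤ a1 ∧ a1 ≤ 8 := by omega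
  have hb2 : -8 ≤ a2 ∧ a2 ≤ 8 := by omega
  have hb3 : -8 ≤ a3 ∧ a3 ≤ 8 := by omega
  have hm := dec_lemma (a0 + 8).toNat (arg_range _ hb0.1 hb0.2)
    (a1 + 8).toNat (arg_range _ hb1.1 hb1.2)
    (a2 + 8).toNat (arg_range _ hb2.1 hb2.2)
    (a3 + 8).toNat (arg_range _ hb3.1 hb3.2)
    (arg_mod8 _ _ h1 hb0.1 hb0.2 hb1.1 hb1.2)
    (arg_mod8 _ _ h2 hb2.1 hb2.2 hb3.1 hb3.2)
    (arg_mod4 _ _ h3 hb0.1 hb0.2 hb2.1 hb2.2)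
    (arg_sum _ _ _ _ h)
  have he : (a0, a1, a2, a3)
      = gmap ((a0 + 8).toNat, (a1 + 8).toNat, (a2 + 8).toNat, (a3 + 8).toNat) := by
    simp only [gmap]
    refine Prod.ext ?_ (Prod.ext ?_ (Prod.ext ?_ ?_)) <;> simp <;> omega
  rw [he, S28]
  exact List.mem_toFinset.mpr (List.mem_map_of_mem (f := gmap) hm)

noncomputable def fS (p : ℤ × ℤ × ℤ × ℤ) : Fin 4 → ℝ :=
  ![(p.1 : ℝ) / 8, (p.2.1 : ℝ) / 8, (p.2.2.1 : ℝ) / 8, (p.2.2.2 : ℝ) / 8]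

lemma fS_inj : Function.Injective fS := by
  intro p q h
  have h0 := congrFun h 0
  have h1 := congrFun h 1
  have h2 := congrFun h 2
  have h3 := congrFun h 3
  simp only [fS, Matrix.cons_val_zero, Matrix.cons_val_one, Matrix.head_cons,
    Matrix.cons_val_two, Matrix.cons_val_three, Matrix.tail_cons] at h0 h1 h2 h3
  have e0 : p.1 = q.1 := by exact_mod_cast (by linarith : (p.1 : ℝ) = q.1)
  have e1 : p.2.1 = q.2.1 := by exact_mod_cast (by linarith : (p.2.1 : ℝ) = q.2.1)
  have e2 : p.2.2.1 = q.2.2.1 := by exact_mod_cast (by linarith : (p.2.2.1 : ℝ) = q.2.2.1)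
  have e3 : p.2.2.2 = q.2.2.2 := by exact_mod_cast (by linarith : (p.2.2.2 : ℝ) = q.2.2.2)
  exact Prod.ext e0 (Prod.ext e1 (Prod.ext e2 e3))

lemma fS_mem_L1 (p : ℤ × ℤ × ℤ × ℤ) (h1 : 8 ∣ p.1 + 3 * p.2.1)
    (h2 : 8 ∣ p.2.2.1 + 3 * p.2.2.2) (h3 : 4 ∣ p.1 - p.2.2.1) : fS p ∈ L1 := by
  apply Msub_le_L1
  exact ⟨![p.1, p.2.1, p.2.2.1, p.2.2.2], fun i => by fin_cases i <;> rfl, h1, h2, h3⟩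

lemma S28_conds : ∀ p ∈ S28, (8 ∣ p.1 + 3 * p.2.1) ∧ (8 ∣ p.2.2.1 + 3 * p.2.2.2)
    ∧ (4 ∣ p.1 - p.2.2.1) ∧ |p.1| + |p.2.1| + |p.2.2.1| + |p.2.2.2| = 8 := by decide

lemma l1_fS (p : ℤ × ℤ × ℤ × ℤ) :
    l1 (fS p) = ((|p.1| + |p.2.1| + |p.2.2.1| + |p.2.2.2| : ℤ) : ℝ) / 8 := by
  simp only [l1, fS, Fin.sum_univ_four, Matrix.cons_val_zero, Matrix.cons_val_one,
    Matrix.head_cons, Matrix.cons_val_two, Matrix.cons_val_three, Matrix.tail_cons,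
    abs_div, abs_of_nonneg (by norm_num : (0:ℝ) ≤ 8)]
  push_cast [Int.cast_abs]
  ring

theorem stmt14 : Set.ncard {x : Fin 4 → ℝ | x ∈ L1 ∧ l1 x = 1} = 28 := by
  have hset : {x : Fin 4 → ℝ | x ∈ L1 ∧ l1 x = 1} = fS '' ↑S28 := by
    ext x
    constructor
    · rintro ⟨hmem, hl1⟩
      obtain ⟨a, hx, h1, h2, h3⟩ := L1_le_Msub hmem
      have habs : |(a 0 : ℝ)| + |(a 1 : ℝ)| + |(a 2 : ℝ)| + |(a 3 : ℝ)| = 8 := by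
        have he : l1 x = (|(a 0 : ℝ)| + |(a 1 : ℝ)| + |(a 2 : ℝ)| + |(a 3 : ℝ)|) / 8 := by
          simp only [l1, Fin.sum_univ_four, hx, abs_div,
            abs_of_nonneg (by norm_num : (0:ℝ) ≤ 8)]
          ring
        rw [he] at hl1
        linarith
      have hZ : |a 0| + |a 1| + |a 2| + |a 3| = (8 : ℤ) := by exact_mod_cast habs
      have hnat : (a 0).natAbs + (a 1).natAbs + (a 2).natAbs + (a 3).natAbs = 8 := by
        simp only [Int.abs_eq_natAbs] at hZ
        exact_mod_cast hZ
      refine ⟨(a 0, a 1, a 2, a 3), key_lemma _ _ _ _ h1 h2 h3 hnat, ?_⟩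
      funext i
      fin_cases i <;> simp [fS, hx]
    · rintro ⟨p, hp, rfl⟩
      rw [Finset.mem_coe] at hp
      obtain ⟨c1, c2, c3, c4⟩ := S28_conds p hp
      refine ⟨fS_mem_L1 p c1 c2 c3, ?_⟩
      rw [l1_fS, c4]
      norm_num
  rw [hset, Set.ncard_image_of_injective _ fS_inj, Set.ncard_coe_finset]
  decide
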